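/- With g as defined: if f_L < f_H, then g(f) > 0 for every f ∈ (f_L, f_H) and g(f) < 0 for every f ∈ [0, f_L) ∪ (f_H, 1); if f_H < f_L, then g(f) < 0 for every f ∈ (f_H, f_L) and g(f) > 0 for every f ∈ [0, f_H) ∪ (f_L, 1). -/

import Mathlib

open Complex BigOperators

/-- The sign `s = sign(f_H - f_L)`. -/
noncomputable def sgnLH (fL fH : ℝ) : ℝ := Real.sign (fH - fL)

/-- The coefficient `r_0 = -2 cos(π(f_H - f_L)) · sign(f_H - f_L)`. -/
noncomputable def r0LH (fL fH : ℝ) : ℝ :=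
  -2 * Real.cos (Real.pi * (fH - fL)) * Real.sign (fH - fL)

/-- The coefficient `r_1 = e^{iπ(f_L + f_H)} · sign(f_H - f_L)`. -/
noncomputable def r1LH (fL fH : ℝ) : ℂ :=
  Complex.exp ((Real.pi : ℂ) * Complex.I * ((fL : ℂ) + (fH : ℂ))) *
    ((Real.sign (fH - fL) : ℝ) : ℂ)

/-- The trigonometric polynomial `g(f) = r_0 + 2 Re(r_1 e^{-2πi f})`. -/
noncomputable def gpoly (fL fH : ℝ) (f : ℝ) : ℝ :=
  r0LH fL fH +
    2 * (r1LH fL fH * Complex.exp (-(2 * (Real.pi : ℂ) * Complex.I * (f : ℂ)))).re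

/-!
Product-to-sum turns `g` into `-4 s sin(π(f_H - f)) sin(π(f_L - f))`, and for `|x| < 1` the
number `sin(πx)` has the sign of `x`. So the sign of `g(f)` is `-s` times the signs of `f_H - f`
and `f_L - f`.
-/

open scoped Real

lemma gpoly_eq_sin_mul_sin (fL fH f : ℝ) :
    gpoly fL fH f =
      -4 * Real.sign (fH - fL) * Real.sin (π * (fH - f)) * Real.sin (π * (fL - f)) := by
  have hr1 : r1LH fL fH * Complex.exp (-(2 * (π : ℂ) * Complex.I * (f : ℂ))) =
      (Real.sign (fH - fL) : ℂ) * Complex.exp ((π * (fL + fH - 2 * f) : ℝ) * Complex.I) := by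
    rw [r1LH, mul_comm _ (Real.sign (fH - fL) : ℂ), mul_assoc, ← Complex.exp_add]
    congr 2
    push_cast
    ring
  rw [gpoly, hr1, Complex.re_ofReal_mul, Complex.exp_ofReal_mul_I_re, r0LH]
  have hcos := Real.cos_sub_cos (π * (fL + fH - 2 * f)) (π * (fH - fL))
  rw [show (π * (fL + fH - 2 * f) + π * (fH - fL)) / 2 = π * (fH - f) by ring,
    show (π * (fL + fH - 2 * f) - π * (fH - fL)) / 2 = π * (fL - f) by ring] at hcos
  linear_combination 2 * Real.sign (fH - fL) * hcos

lemma sign_sin_pi_mul {x : ℝ} (hx : |x| < 1) :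
    SignType.sign (Real.sin (π * x)) = SignType.sign x := by
  obtain ⟨hx₁, hx₂⟩ := abs_lt.mp hx
  rcases lt_trichotomy x 0 with hneg | rfl | hpos
  · have : Real.sin (π * x) < 0 :=
      Real.sin_neg_of_neg_of_neg_pi_lt (by nlinarith [Real.pi_pos]) (by nlinarith [Real.pi_pos])
    rw [sign_neg hneg, sign_neg this]
  · simp
  · have : 0 < Real.sin (π * x) :=
      Real.sin_pos_of_pos_of_lt_pi (by positivity) (by nlinarith [Real.pi_pos])
    rw [sign_pos hpos, sign_pos this]

lemma sign_realSign (r : ℝ) : SignType.sign (Real.sign r) = SignType.sign r := by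
  rcases lt_trichotomy r 0 with hr | rfl | hr
  · rw [Real.sign_of_neg hr, sign_neg hr, sign_neg (by norm_num)]
  · simp [Real.sign_zero]
  · rw [Real.sign_of_pos hr, sign_pos hr, sign_pos one_pos]

lemma sign_gpoly {fL fH f : ℝ} (hL : |fL - f| < 1) (hH : |fH - f| < 1) :
    SignType.sign (gpoly fL fH f) =
      -(SignType.sign (fH - fL) * SignType.sign (fH - f) * SignType.sign (fL - f)) := by
  rw [gpoly_eq_sin_mul_sin, sign_mul, sign_mul, sign_mul, sign_sin_pi_mul hL, sign_sin_pi_mul hH,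
    sign_realSign, sign_neg (by norm_num : (-4 : ℝ) < 0), neg_one_mul, neg_mul, neg_mul]

theorem stmt2_general (fL fH : ℝ) (hL0 : 0 ≤ fL) (hL1 : fL < 1) (hH0 : 0 ≤ fH) (hH1 : fH < 1) :
    (fL < fH →
      (∀ f : ℝ, fL < f → f < fH → 0 < gpoly fL fH f) ∧
      (∀ f : ℝ, (0 ≤ f ∧ f < fL) ∨ (fH < f ∧ f < 1) → gpoly fL fH f < 0)) ∧
    (fH < fL →
      (∀ f : ℝ, fH < f → f < fL → gpoly fL fH f < 0) ∧
      (∀ f : ℝ, (0 ≤ f ∧ f < fH) ∨ (fL < f ∧ f < 1) → 0 < gpoly fL fH f)) := by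
  have hsign (f : ℝ) (hf0 : 0 ≤ f) (hf1 : f < 1) := sign_gpoly (fL := fL) (fH := fH)
    (abs_lt.2 ⟨by linarith, by linarith⟩) (abs_lt.2 ⟨by linarith, by linarith⟩)
  have sign_sub_pos {a b : ℝ} (h : a < b) : SignType.sign (b - a) = 1 := sign_pos (sub_pos.2 h)
  have sign_sub_neg {a b : ℝ} (h : a < b) : SignType.sign (a - b) = -1 := sign_neg (sub_neg.2 h)
  refine ⟨fun hLH => ⟨fun f h1 h2 => ?_, ?_⟩, fun hHL => ⟨fun f h1 h2 => ?_, ?_⟩⟩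
  · rw [← sign_eq_one_iff, hsign f (by linarith) (by linarith), sign_sub_pos hLH,
      sign_sub_pos h2, sign_sub_neg h1]
    rfl
  · rintro f (⟨h1, h2⟩ | ⟨h1, h2⟩)
    · rw [← sign_eq_neg_one_iff, hsign f h1 (by linarith), sign_sub_pos hLH,
        sign_sub_pos (h2.trans hLH), sign_sub_pos h2]
      rfl
    · rw [← sign_eq_neg_one_iff, hsign f (by linarith) h2, sign_sub_pos hLH, sign_sub_neg h1,
        sign_sub_neg (hLH.trans h1)]
      rfl
  · rw [← sign_eq_neg_one_iff, hsign f (by linarith) (by linarith), sign_sub_neg hHL,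
      sign_sub_neg h1, sign_sub_pos h2]
    rfl
  · rintro f (⟨h1, h2⟩ | ⟨h1, h2⟩)
    · rw [← sign_eq_one_iff, hsign f h1 (by linarith), sign_sub_neg hHL, sign_sub_pos h2,
        sign_sub_pos (h2.trans hHL)]
      rfl
    · rw [← sign_eq_one_iff, hsign f (by linarith) h2, sign_sub_neg hHL,
        sign_sub_neg (hHL.trans h1), sign_sub_neg h1]
      rfl

/-- Sign pattern of `g`: if `f_L < f_H` then `g > 0` on `(f_L, f_H)` and `g < 0`
on `[0, f_L) ∪ (f_H, 1)`; if `f_H < f_L` then `g < 0` on `(f_H, f_L)` and `g > 0`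
on `[0, f_H) ∪ (f_L, 1)`. -/
theorem stmt2 (fL fH : ℝ) (hL0 : 0 ≤ fL) (hL1 : fL < 1) (hH0 : 0 ≤ fH) (hH1 : fH < 1)
    (hne : fL ≠ fH) :
    (fL < fH →
      (∀ f : ℝ, fL < f → f < fH → 0 < gpoly fL fH f) ∧
      (∀ f : ℝ, (0 ≤ f ∧ f < fL) ∨ (fH < f ∧ f < 1) → gpoly fL fH f < 0)) ∧
    (fH < fL →
      (∀ f : ℝ, fH < f → f < fL → gpoly fL fH f < 0) ∧
      (∀ f : ℝ, (0 ≤ f ∧ f < fH) ∨ (fL < f ∧ f < 1) → 0 < gpoly fL fH f)) :=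
  stmt2_general fL fH hL0 hL1 hH0 hH1
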